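/- For every integer n ≥ 1, every integer e ≥ 1, and every i with 1 ≤ i ≤ n, the polynomial identity ∑_{j=1}^{n} (R_n^e)_{i,j} · x^{j-1} = (F_e + F_{e+1} x)^{i-1} · (F_{e-1} + F_e x)^{n-i} holds in ℤ[x]; equivalently, the (i,j) entry of R_n^e is the coefficient of x^{j-1} in (F_e + F_{e+1} x)^{i-1} (F_{e-1} + F_e x)^{n-i}. -/
import Mathlib


open Polynomial

/-- `R n` is the `n × n` integer matrix whose `(i,j)` entry (1-based) is
`C(i-1, n-j)`; with 0-based indices the entry is `C(i, n-1-j)`. -/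
def binR (n : ℕ) : Matrix (Fin n) (Fin n) ℤ :=
  fun i j => (Nat.choose i (n - 1 - j) : ℤ)

lemma coeff_sum_fin' (n : ℕ) (f : Fin n → ℤ) (k : ℕ) :
    (∑ j : Fin n, C (f j) * X ^ (j : ℕ)).coeff k = if h : k < n then f ⟨k, h⟩ else 0 := by
  rw [finset_sum_coeff]
  split
  · rename_i h
    rw [Finset.sum_eq_single (⟨k, h⟩ : Fin n)]
    · simp
    · intro b _ hb
      simp only [coeff_C_mul, coeff_X_pow]
      rw [if_neg, mul_zero]
      intro hh
      exact hb (Fin.ext hh.symm)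
    · simp
  · rename_i h
    apply Finset.sum_eq_zero
    intro b _
    simp only [coeff_C_mul, coeff_X_pow]
    rw [if_neg, mul_zero]
    omega

lemma coeff_sum_fin (n : ℕ) (f : Fin n → ℤ) (k : Fin n) :
    (∑ j : Fin n, C (f j) * X ^ (j : ℕ)).coeff (k : ℕ) = f k := by
  rw [coeff_sum_fin', dif_pos k.isLt]

lemma baseB (n i0 : ℕ) (h : i0 < n) :
    ∑ j : Fin n, C ((binR n) ⟨i0, h⟩ j) * X ^ (j : ℕ) = (1 + X) ^ i0 * X ^ (n - 1 - i0) := by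
  ext k
  rw [coeff_sum_fin', coeff_mul_X_pow']
  simp only [binR]
  split_ifs with h1 h2
  · rw [coeff_one_add_X_pow]
    have h3 : n - 1 - k ≤ i0 := by omega
    have h4 : k - (n - 1 - i0) = i0 - (n - 1 - k) := by omega
    rw [h4, Nat.choose_symm h3]
  · rw [Nat.choose_eq_zero_of_lt (by omega), Nat.cast_zero]
  · rw [coeff_one_add_X_pow, Nat.choose_eq_zero_of_lt (by omega), Nat.cast_zero]
  · rfl

set_option maxHeartbeats 1000000 in
lemma key (m i : ℕ) (him : i ≤ m) (a b c d : ℤ) :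
    ∑ k ∈ Finset.range (m + 1),
        C (((C a + C b * X) ^ i * (C c + C d * X) ^ (m - i) : ℤ[X]).coeff k) *
          ((1 + X) ^ k * X ^ (m - k)) =
      (C b + C (a + b) * X) ^ i * (C d + C (c + d) * X) ^ (m - i) := by
  have hdeg : ((C a + C b * X) ^ i * (C c + C d * X) ^ (m - i) : ℤ[X]).natDegree < m + 1 := by
    have h1 : ((C a + C b * X : ℤ[X]) ^ i).natDegree ≤ i := by
      apply Polynomial.natDegree_pow_le.trans
      have h : (C a + C b * X : ℤ[X]).natDegree ≤ 1 := by compute_degree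
      calc i * (C a + C b * X : ℤ[X]).natDegree ≤ i * 1 := Nat.mul_le_mul_left i h
        _ = i := by omega
    have h2 : ((C c + C d * X : ℤ[X]) ^ (m - i)).natDegree ≤ m - i := by
      apply Polynomial.natDegree_pow_le.trans
      have h : (C c + C d * X : ℤ[X]).natDegree ≤ 1 := by compute_degree
      calc (m - i) * (C c + C d * X : ℤ[X]).natDegree ≤ (m - i) * 1 :=
            Nat.mul_le_mul_left (m - i) h
        _ = m - i := by omega
    have h3 := Polynomial.natDegree_mul_le (p := (C a + C b * X : ℤ[X]) ^ i)
      (q := (C c + C d * X : ℤ[X]) ^ (m - i))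
    omega
  apply RatFunc.algebraMap_injective ℤ
  have hx : (RatFunc.X : RatFunc ℤ) ≠ 0 := by
    rw [← RatFunc.algebraMap_X]
    exact RatFunc.algebraMap_ne_zero Polynomial.X_ne_zero
  set φ := algebraMap ℤ[X] (RatFunc ℤ) with hφ
  set x := (RatFunc.X : RatFunc ℤ) with hxdef
  have hφX : φ X = x := RatFunc.algebraMap_X
  have hφC : ∀ r : ℤ, φ (C r) = (r : RatFunc ℤ) := by
    intro r
    rw [eq_intCast (Polynomial.C : ℤ →+* ℤ[X]) r, map_intCast]
  set u : RatFunc ℤ := (1 + x) / x with hu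
  have hxu : x * u = 1 + x := by
    rw [hu, mul_div_cancel₀ _ hx]
  set p : ℤ[X] := (C a + C b * X) ^ i * (C c + C d * X) ^ (m - i) with hp
  have haev : (Polynomial.aeval u) p = ((a : RatFunc ℤ) + b * u) ^ i *
      ((c : RatFunc ℤ) + d * u) ^ (m - i) := by
    rw [hp]
    simp [map_mul, map_pow, map_add]
  have haev2 : (Polynomial.aeval u) p =
      ∑ k ∈ Finset.range (m + 1), ((p.coeff k : RatFunc ℤ)) * u ^ k := by
    conv_lhs => rw [p.as_sum_range' (m + 1) hdeg]
    rw [map_sum]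
    apply Finset.sum_congr rfl
    intro k _
    rw [Polynomial.aeval_monomial]
    simp
  have hterm : ∀ k ∈ Finset.range (m + 1),
      φ (C (p.coeff k) * ((1 + X) ^ k * X ^ (m - k))) =
        (p.coeff k : RatFunc ℤ) * u ^ k * x ^ m := by
    intro k hk
    rw [Finset.mem_range] at hk
    rw [map_mul, map_mul, map_pow, map_pow, map_add, map_one, hφX, hφC]
    have hxm : x ^ m = x ^ (m - k) * x ^ k := by
      rw [← pow_add]; congr 1; omega
    have h5 : x ^ k * u ^ k = (1 + x) ^ k := by
      rw [← mul_pow, hxu]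
    calc (p.coeff k : RatFunc ℤ) * ((1 + x) ^ k * x ^ (m - k))
        = (p.coeff k : RatFunc ℤ) * (x ^ k * u ^ k * x ^ (m - k)) := by rw [h5]
      _ = (p.coeff k : RatFunc ℤ) * u ^ k * (x ^ (m - k) * x ^ k) := by ring
      _ = (p.coeff k : RatFunc ℤ) * u ^ k * x ^ m := by rw [← hxm]
  rw [map_sum, Finset.sum_congr rfl hterm, ← Finset.sum_mul, ← haev2, haev]
  simp only [map_add, map_mul, map_pow, hφX, hφC]
  have hxm : x ^ m = x ^ i * x ^ (m - i) := by rw [← pow_add]; congr 1; omega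
  rw [hxm, show ((a : RatFunc ℤ) + b * u) ^ i * ((c : RatFunc ℤ) + d * u) ^ (m - i) *
      (x ^ i * x ^ (m - i)) = (((a : RatFunc ℤ) + b * u) * x) ^ i *
      ((((c : RatFunc ℤ) + d * u)) * x) ^ (m - i) by rw [mul_pow, mul_pow]; ring]
  have h1 : ((a : RatFunc ℤ) + b * u) * x = ((b : ℤ) : RatFunc ℤ) + (((a : ℤ) + b : ℤ) : RatFunc ℤ) * x := by
    push_cast
    rw [add_mul, mul_assoc, mul_comm u x, hxu]
    ring
  have h2 : ((c : RatFunc ℤ) + d * u) * x = ((d : ℤ) : RatFunc ℤ) + (((c : ℤ) + d : ℤ) : RatFunc ℤ) * x := by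
    push_cast
    rw [add_mul, mul_assoc, mul_comm u x, hxu]
    ring
  rw [h1, h2]
  push_cast
  ring


lemma main_lemma (n e : ℕ) (hn : 1 ≤ n) (he : 1 ≤ e) (i0 : ℕ) (h : i0 < n) :
    ∑ j : Fin n, C ((binR n ^ e) ⟨i0, h⟩ j) * X ^ (j : ℕ) =
      (C (Nat.fib e : ℤ) + C (Nat.fib (e + 1) : ℤ) * X) ^ i0 *
        (C (Nat.fib (e - 1) : ℤ) + C (Nat.fib e : ℤ) * X) ^ (n - 1 - i0) := by
  induction e, he using Nat.le_induction with
  | base =>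
    rw [pow_one, baseB n i0 h]
    norm_num [Nat.fib_one, Nat.fib_two]
  | succ e he1 ih =>
    obtain ⟨e', rfl⟩ : ∃ e', e = e' + 1 := ⟨e - 1, by omega⟩
    have hA : ∀ k : Fin n, (binR n ^ (e' + 1)) ⟨i0, h⟩ k =
        ((C (Nat.fib (e' + 1) : ℤ) + C (Nat.fib (e' + 2) : ℤ) * X) ^ i0 *
          (C (Nat.fib e' : ℤ) + C (Nat.fib (e' + 1) : ℤ) * X) ^ (n - 1 - i0)).coeff (k : ℕ) := by
      intro k
      rw [show (e' + 1 : ℕ) - 1 = e' from rfl] at ih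
      rw [← ih, coeff_sum_fin]
    calc ∑ j : Fin n, C ((binR n ^ (e' + 1 + 1)) ⟨i0, h⟩ j) * X ^ (j : ℕ)
        = ∑ j : Fin n, ∑ k : Fin n,
            C ((binR n ^ (e' + 1)) ⟨i0, h⟩ k) * (C (binR n k j) * X ^ (j : ℕ)) := by
          apply Finset.sum_congr rfl
          intro j _
          rw [pow_succ, Matrix.mul_apply, map_sum, Finset.sum_mul]
          simp [map_mul, mul_assoc]
      _ = ∑ k : Fin n, C ((binR n ^ (e' + 1)) ⟨i0, h⟩ k) *
            ∑ j : Fin n, C (binR n k j) * X ^ (j : ℕ) := by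
          rw [Finset.sum_comm]
          simp [Finset.mul_sum]
      _ = ∑ k : Fin n,
            C (((C (Nat.fib (e' + 1) : ℤ) + C (Nat.fib (e' + 2) : ℤ) * X) ^ i0 *
              (C (Nat.fib e' : ℤ) + C (Nat.fib (e' + 1) : ℤ) * X) ^ (n - 1 - i0)).coeff (k : ℕ)) *
            ((1 + X) ^ (k : ℕ) * X ^ (n - 1 - (k : ℕ))) := by
          apply Finset.sum_congr rfl
          intro k _
          rw [hA k]
          congr 1
          have hk : (⟨(k : ℕ), k.isLt⟩ : Fin n) = k := rfl
          rw [← hk, baseB n (k : ℕ) k.isLt]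
      _ = ∑ k ∈ Finset.range (n - 1 + 1),
            C (((C (Nat.fib (e' + 1) : ℤ) + C (Nat.fib (e' + 2) : ℤ) * X) ^ i0 *
              (C (Nat.fib e' : ℤ) + C (Nat.fib (e' + 1) : ℤ) * X) ^ (n - 1 - i0)).coeff k) *
            ((1 + X) ^ k * X ^ (n - 1 - k)) := by
          rw [show n - 1 + 1 = n from by omega]
          exact Fin.sum_univ_eq_sum_range (fun k =>
            C (((C (Nat.fib (e' + 1) : ℤ) + C (Nat.fib (e' + 2) : ℤ) * X) ^ i0 *
              (C (Nat.fib e' : ℤ) + C (Nat.fib (e' + 1) : ℤ) * X) ^ (n - 1 - i0)).coeff k) *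
            ((1 + X) ^ k * X ^ (n - 1 - k))) n
      _ = (C (Nat.fib (e' + 2) : ℤ) + C ((Nat.fib (e' + 1) : ℤ) + (Nat.fib (e' + 2) : ℤ)) * X) ^ i0 *
            (C (Nat.fib (e' + 1) : ℤ) + C ((Nat.fib e' : ℤ) + (Nat.fib (e' + 1) : ℤ)) * X) ^ ((n - 1) - i0) := by
          exact key (n - 1) i0 (by omega) _ _ _ _
      _ = _ := by
          have h1 : Nat.fib (e' + 3) = Nat.fib (e' + 1) + Nat.fib (e' + 2) :=
            Nat.fib_add_two (n := e' + 1)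
          have h2 : Nat.fib (e' + 2) = Nat.fib e' + Nat.fib (e' + 1) :=
            Nat.fib_add_two (n := e')
          have g1 : ((Nat.fib (e' + 1) : ℤ) + (Nat.fib (e' + 2) : ℤ)) = (Nat.fib (e' + 3) : ℤ) := by
            rw [h1]; push_cast; ring
          have g2 : ((Nat.fib e' : ℤ) + (Nat.fib (e' + 1) : ℤ)) = (Nat.fib (e' + 2) : ℤ) := by
            rw [h2]; push_cast; ring
          rw [g1, g2]
          norm_num

theorem stmt_2 (n e : ℕ) (hn : 1 ≤ n) (he : 1 ≤ e)
    (i : ℕ) (hi1 : 1 ≤ i) (hi2 : i ≤ n) :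
    ∑ j : Fin n, C ((binR n ^ e) ⟨i - 1, by omega⟩ j) * X ^ (j : ℕ) =
      (C (Nat.fib e : ℤ) + C (Nat.fib (e + 1) : ℤ) * X) ^ (i - 1) *
        (C (Nat.fib (e - 1) : ℤ) + C (Nat.fib e : ℤ) * X) ^ (n - i) := by
  have h : n - i = n - 1 - (i - 1) := by omega
  rw [h]
  exact main_lemma n e hn he (i - 1) (by omega)
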